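/- arXiv:1401.2272 — 3 statements merged into one kernel-verified Lean document; each statement's English description precedes it below -/
import Mathlib

section
/- Let N ≥ 1 be a natural number, j an integer, and e_0, e_1, …, e_N arbitrary real numbers. Then Σ_{l=1}^{N} (e_l − e_{l−1}) · sin(jπl/N) = −2 sin(jπ/(2N)) · Σ_{l=1}^{N} e_{l−1} · cos(jπ(l−1/2)/N). -/
open Real Finset

/-- Summation by parts identity: for any reals `e_0, …, e_N` and integer `j`,
`Σ_{l=1}^{N} (e_l - e_{l-1}) sin(jπl/N)
  = -2 sin(jπ/(2N)) Σ_{l=1}^{N} e_{l-1} cos(jπ(l-1/2)/N)`. -/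
theorem summation_by_parts_sine (N : ℕ) (hN : 1 ≤ N) (j : ℤ) (e : ℕ → ℝ) :
    ∑ l ∈ Finset.Icc 1 N,
        (e l - e (l - 1)) * Real.sin ((j : ℝ) * Real.pi * (l : ℝ) / (N : ℝ)) =
      -2 * Real.sin ((j : ℝ) * Real.pi / (2 * (N : ℝ))) *
        ∑ l ∈ Finset.Icc 1 N,
          e (l - 1) * Real.cos ((j : ℝ) * Real.pi * ((l : ℝ) - 1/2) / (N : ℝ)) := by
  have hN0 : (N : ℝ) ≠ 0 := Nat.cast_ne_zero.mpr (by omega)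
  set s : ℕ → ℝ := fun l => Real.sin ((j : ℝ) * Real.pi * (l : ℝ) / (N : ℝ)) with hs
  set f : ℕ → ℝ := fun l => e l * s l with hf
  have h1 : ∀ l ∈ Finset.Icc 1 N,
      (e l - e (l - 1)) * s l
        + 2 * Real.sin ((j : ℝ) * Real.pi / (2 * (N : ℝ)))
            * (e (l - 1) * Real.cos ((j : ℝ) * Real.pi * ((l : ℝ) - 1/2) / (N : ℝ)))
        = f l - f (l - 1) := by
    intro l hl
    have hl1 : 1 ≤ l := (Finset.mem_Icc.mp hl).1
    have hcast : ((l - 1 : ℕ) : ℝ) = (l : ℝ) - 1 := by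
      rw [Nat.cast_sub hl1]; simp
    have hdiff : s l - s (l - 1)
        = 2 * Real.sin ((j : ℝ) * Real.pi / (2 * (N : ℝ)))
            * Real.cos ((j : ℝ) * Real.pi * ((l : ℝ) - 1/2) / (N : ℝ)) := by
      simp only [hs, hcast]
      rw [Real.sin_sub_sin]
      congr 2
      · field_simp; ring
      · field_simp; ring
    simp only [hf]
    linear_combination (-e (l - 1)) * hdiff
  have h2 : ∀ n : ℕ, ∑ l ∈ Finset.Icc 1 n, (f l - f (l - 1)) = f n - f 0 := by
    intro n
    induction n with
    | zero => simp
    | succ n ih =>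
        rw [Finset.sum_Icc_succ_top (by omega), ih]
        simp
  have h2 := h2 N
  have hsN : s N = 0 := by
    simp only [hs]
    have : (j : ℝ) * Real.pi * (N : ℝ) / (N : ℝ) = (j : ℝ) * Real.pi := by
      field_simp
    rw [this]
    exact_mod_cast Real.sin_int_mul_pi j
  have hs0 : s 0 = 0 := by simp [hs]
  have h3 : ∑ l ∈ Finset.Icc 1 N,
      ((e l - e (l - 1)) * s l
        + 2 * Real.sin ((j : ℝ) * Real.pi / (2 * (N : ℝ)))
            * (e (l - 1) * Real.cos ((j : ℝ) * Real.pi * ((l : ℝ) - 1/2) / (N : ℝ)))) = 0 := by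
    rw [Finset.sum_congr rfl h1, h2, hf]
    simp [hsN, hs0]
  rw [Finset.sum_add_distrib, ← Finset.mul_sum] at h3
  linarith [h3]
end

section
/- Let J ≥ 1, let c_1, …, c_J be strictly positive real numbers, fix j ∈ {1,…,J}, and define w_j(x) = (x + c_j)^{−2} / Σ_{m=1}^J (x + c_m)^{−2} for x ≥ 0. Then w_j is differentiable on [0,∞) and for every x ≥ 0: |w_j′(x)| ≤ 2 w_j(x) · (c_j^{−1} + (min_{1≤m≤J} c_m)^{−1}). -/
open Finset

/-!
Write `w_j = a_j / Σ_m a_m` with `a_m(x) = (x + c_m)⁻²`. Each `a_m` has logarithmic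
derivative `-2 / (x + c_m)`, of size at most `2 / c_m ≤ 2 / min c` for `x ≥ 0`; the logarithmic
derivative of the sum is a convex combination of these, so it obeys the same bound. Hence
`|w_j'| / w_j = |a_j'/a_j - (Σ a_m)'/Σ a_m| ≤ 2 / c_j + 2 / min c`.
-/

theorem hasDerivAt_inv_add_sq {c x : ℝ} (h : x + c ≠ 0) :
    HasDerivAt (fun y => ((y + c) ^ 2)⁻¹) (-2 * (x + c)⁻¹ * ((x + c) ^ 2)⁻¹) x := by
  refine (((hasDerivAt_id' x).add_const c).fun_pow 2).fun_inv (pow_ne_zero 2 h)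
    |>.congr_deriv ?_
  field_simp
  ring

theorem abs_neg_two_mul_inv_mul_le {t d a : ℝ} (hd : 0 < d) (hdt : d ≤ t) (ha : 0 ≤ a) :
    |-2 * t⁻¹ * a| ≤ 2 * d⁻¹ * a := by
  have ht : 0 < t := hd.trans_le hdt
  rw [abs_mul, abs_mul, abs_neg, abs_two, abs_inv, abs_of_pos ht, abs_of_nonneg ha]
  gcongr

theorem abs_sum_le_mul_sum {ι : Type*} (s : Finset ι) {u v : ι → ℝ} {b : ℝ}
    (h : ∀ i ∈ s, |u i| ≤ b * v i) : |∑ i ∈ s, u i| ≤ b * ∑ i ∈ s, v i := by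
  rw [mul_sum]
  exact (abs_sum_le_sum_abs _ _).trans (sum_le_sum h)

theorem abs_deriv_div_le_of_abs_le_mul {f g : ℝ → ℝ} {f' g' a b x : ℝ}
    (hf : HasDerivAt f f' x) (hg : HasDerivAt g g' x) (hfx : 0 ≤ f x) (hgx : 0 < g x)
    (hf' : |f'| ≤ a * f x) (hg' : |g'| ≤ b * g x) :
    |deriv (fun y => f y / g y) x| ≤ (a + b) * (f x / g x) := by
  rw [(hf.fun_div hg hgx.ne').deriv, abs_div, abs_of_pos (pow_pos hgx 2),
    div_le_iff₀ (pow_pos hgx 2)]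
  calc |f' * g x - f x * g'| ≤ |f'| * g x + f x * |g'| := by
        refine (abs_sub _ _).trans_eq ?_
        rw [abs_mul, abs_mul, abs_of_pos hgx, abs_of_nonneg hfx]
    _ ≤ a * f x * g x + f x * (b * g x) := by gcongr
    _ = (a + b) * (f x / g x) * g x ^ 2 := by field_simp

theorem weight_derivative_bound_general (J : ℕ) (c : Fin J → ℝ)
    (hc : ∀ m, 0 < c m) (j : Fin J) :
    ∀ x : ℝ, 0 ≤ x →
      DifferentiableAt ℝ
          (fun y => ((y + c j)^2)⁻¹ / ∑ m, ((y + c m)^2)⁻¹) x ∧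
        |deriv (fun y => ((y + c j)^2)⁻¹ / ∑ m, ((y + c m)^2)⁻¹) x| ≤
          2 * (((x + c j)^2)⁻¹ / ∑ m, ((x + c m)^2)⁻¹) *
            ((c j)⁻¹ + (Finset.univ.inf' ⟨j, Finset.mem_univ j⟩ c)⁻¹) := by
  intro x hx
  set cmin := univ.inf' ⟨j, mem_univ j⟩ c
  have hcmin : 0 < cmin := (lt_inf'_iff _).2 fun m _ => hc m
  have hshift : ∀ m, c m ≤ x + c m := fun m => le_add_of_nonneg_left hx
  have hpos (m : Fin J) : 0 < x + c m := (hc m).trans_le (hshift m)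
  have hterm (m : Fin J) := hasDerivAt_inv_add_sq (hpos m).ne'
  have hsum := HasDerivAt.fun_sum fun m (_ : m ∈ univ) => hterm m
  have hsum_pos : 0 < ∑ m, ((x + c m) ^ 2)⁻¹ :=
    sum_pos (fun m _ => by have := hpos m; positivity) ⟨j, mem_univ j⟩
  refine ⟨((hterm j).div hsum hsum_pos.ne').differentiableAt, ?_⟩
  calc _ ≤ (2 * (c j)⁻¹ + 2 * cmin⁻¹) *
          (((x + c j) ^ 2)⁻¹ / ∑ m, ((x + c m) ^ 2)⁻¹) :=
        abs_deriv_div_le_of_abs_le_mul (hterm j) hsum (by positivity) hsum_pos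
          (abs_neg_two_mul_inv_mul_le (hc j) (hshift j) (by positivity))
          (abs_sum_le_mul_sum _ fun m _ => abs_neg_two_mul_inv_mul_le hcmin
            ((inf'_le c (mem_univ m)).trans (hshift m)) (by positivity))
    _ = _ := by ring

/-- Uniform bound on the derivative of the oracle weight functions
`w_j(x) = (x + c_j)⁻² / Σ_m (x + c_m)⁻²`: for `x ≥ 0`,
`|w_j'(x)| ≤ 2 w_j(x) (c_j⁻¹ + (min_m c_m)⁻¹)`. -/
theorem weight_derivative_bound (J : ℕ) (hJ : 1 ≤ J) (c : Fin J → ℝ)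
    (hc : ∀ m, 0 < c m) (j : Fin J) :
    ∀ x : ℝ, 0 ≤ x →
      DifferentiableAt ℝ
          (fun y => ((y + c j)^2)⁻¹ / ∑ m, ((y + c m)^2)⁻¹) x ∧
        |deriv (fun y => ((y + c j)^2)⁻¹ / ∑ m, ((y + c m)^2)⁻¹) x| ≤
          2 * (((x + c j)^2)⁻¹ / ∑ m, ((x + c m)^2)⁻¹) *
            ((c j)⁻¹ + (Finset.univ.inf' ⟨j, Finset.mem_univ j⟩ c)⁻¹) :=
  weight_derivative_bound_general J c hc j
end

section
/- Let σ > 0 and η > 0 be real numbers, and let (M_n) and (K_n) be sequences with M_n → ∞ and K_n/M_n → ∞ as n → ∞ (M_n real positive, K_n natural numbers). Then (1/M_n) Σ_{j=1}^{K_n} (1/2)(σ² + η²π²(j/M_n)²)^{−2} → 1/(8ησ³) as n → ∞. -/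
/-!
Write the summand as `f (j / M)` with `f x = (1/2) / (σ² + a² x²)²` and `a = η π`. Since `f` is
decreasing on `[0, ∞)`, the normalized sum is a Riemann sum of mesh `1 / M` squeezed between
`∫₀^{(K+1)/M} f - f 0 / M` and `∫₀^{K/M} f`. Both bounds tend to `∫₀^∞ f`, which the primitive
`x / (4σ² (σ² + a² x²)) + arctan (a x / σ) / (4σ³ a)` evaluates to `π / (8σ³ a) = 1 / (8ησ³)`.
-/

open Real Finset Filter Topology

lemma Finset.sum_Icc_one_eq_sum_range {M : Type*} [AddCommMonoid M] (g : ℕ → M) (N : ℕ) :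
    ∑ j ∈ Icc 1 N, g j = ∑ i ∈ range N, g (i + 1) := by
  rw [range_eq_Ico, sum_Ico_add', zero_add, Ico_add_one_right_eq_Icc]

section RiemannSum

variable {f : ℝ → ℝ} {M : ℝ}

lemma AntitoneOn.comp_div_Icc (hf : AntitoneOn f (Set.Ici 0)) (hM : 0 < M) (b : ℝ) :
    AntitoneOn (fun x => f (x / M)) (Set.Icc 0 b) := fun _ hx _ hy hxy =>
  hf (div_nonneg hx.1 hM.le) (div_nonneg hy.1 hM.le) (div_le_div_of_nonneg_right hxy hM.le)

theorem AntitoneOn.riemannSum_le_integral (hf : AntitoneOn f (Set.Ici 0)) (hM : 0 < M) (N : ℕ) :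
    (1 / M) * ∑ j ∈ Icc 1 N, f (j / M) ≤ ∫ x in 0..N / M, f x := by
  have h := (hf.comp_div_Icc hM (0 + N)).sum_le_integral
  rw [intervalIntegral.integral_comp_div _ hM.ne', zero_div, zero_add, smul_eq_mul] at h
  rw [sum_Icc_one_eq_sum_range, one_div, inv_mul_le_iff₀ hM]
  simpa using h

theorem AntitoneOn.integral_sub_le_riemannSum (hf : AntitoneOn f (Set.Ici 0)) (hM : 0 < M)
    (N : ℕ) : (∫ x in 0..(N + 1) / M, f x) - f 0 / M ≤ (1 / M) * ∑ j ∈ Icc 1 N, f (j / M) := by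
  have h := (hf.comp_div_Icc hM (0 + (N + 1 : ℕ))).integral_le_sum
  rw [intervalIntegral.integral_comp_div _ hM.ne', zero_div, zero_add, smul_eq_mul,
    sum_range_succ'] at h
  rw [sum_Icc_one_eq_sum_range, sub_le_iff_le_add, one_div, div_eq_inv_mul (f 0), ← mul_add,
    le_inv_mul_iff₀ hM]
  simpa using h

theorem AntitoneOn.tendsto_riemannSum {ι : Type*} {l : Filter ι} (hf : AntitoneOn f (Set.Ici 0))
    {L : ℝ} (hL : Tendsto (fun b => ∫ x in 0..b, f x) atTop (𝓝 L)) {M : ι → ℝ} {K : ι → ℕ}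
    (hM : Tendsto M l atTop) (hKM : Tendsto (fun n => (K n : ℝ) / M n) l atTop) :
    Tendsto (fun n => (1 / M n) * ∑ j ∈ Icc 1 (K n), f (j / M n)) l (𝓝 L) := by
  have hM_pos : ∀ᶠ n in l, 0 < M n := hM.eventually_gt_atTop 0
  have hK1M : Tendsto (fun n => ((K n : ℝ) + 1) / M n) l atTop := by
    refine tendsto_atTop_mono' l ?_ hKM
    filter_upwards [hM_pos] with n hn
    gcongr
    linarith
  have hlower : Tendsto (fun n => (∫ x in 0..(K n + 1) / M n, f x) - f 0 / M n) l (𝓝 L) := by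
    simpa using (hL.comp hK1M).sub (tendsto_const_nhds.div_atTop hM)
  refine tendsto_of_tendsto_of_tendsto_of_le_of_le' hlower (hL.comp hKM) ?_ ?_
  · filter_upwards [hM_pos] with n hn using hf.integral_sub_le_riemannSum hn (K n)
  · filter_upwards [hM_pos] with n hn using hf.riemannSum_le_integral hn (K n)

end RiemannSum

noncomputable def fisherInfo (σ a x : ℝ) : ℝ := (1 / 2) / (σ ^ 2 + a ^ 2 * x ^ 2) ^ 2

section FisherInfo

variable {σ a : ℝ}

lemma continuous_fisherInfo (hσ : 0 < σ) : Continuous (fisherInfo σ a) :=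
  continuous_const.div (by fun_prop) fun x => by positivity

lemma antitoneOn_fisherInfo (hσ : 0 < σ) : AntitoneOn (fisherInfo σ a) (Set.Ici 0) :=
  fun x hx y _ hxy => by
    unfold fisherInfo
    gcongr

lemma hasDerivAt_fisherInfo_primitive (hσ : 0 < σ) (ha : 0 < a) (x : ℝ) :
    HasDerivAt
      (fun x => x / (4 * σ ^ 2 * (σ ^ 2 + a ^ 2 * x ^ 2)) + arctan (a * x / σ) / (4 * σ ^ 3 * a))
      (fisherInfo σ a x) x := by
  have h := ((hasDerivAt_id x).div (((hasDerivAt_pow 2 x).const_mul (a ^ 2)).const_add (σ ^ 2)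
      |>.const_mul (4 * σ ^ 2)) (by positivity)).add
    ((((hasDerivAt_id x).const_mul a).div_const σ).arctan.div_const (4 * σ ^ 3 * a))
  refine h.congr_deriv ?_
  simp only [fisherInfo, id]
  field_simp
  ring

lemma integral_fisherInfo (hσ : 0 < σ) (ha : 0 < a) (b : ℝ) :
    ∫ x in 0..b, fisherInfo σ a x =
      b / (4 * σ ^ 2 * (σ ^ 2 + a ^ 2 * b ^ 2)) + arctan (a * b / σ) / (4 * σ ^ 3 * a) := by
  rw [intervalIntegral.integral_eq_sub_of_hasDerivAt
    (fun x _ => hasDerivAt_fisherInfo_primitive hσ ha x)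
    ((continuous_fisherInfo hσ).intervalIntegrable 0 b)]
  simp

lemma tendsto_integral_fisherInfo (hσ : 0 < σ) (ha : 0 < a) :
    Tendsto (fun b => ∫ x in 0..b, fisherInfo σ a x) atTop (𝓝 (π / (8 * σ ^ 3 * a))) := by
  have hrational :
      Tendsto (fun b : ℝ => b / (4 * σ ^ 2 * (σ ^ 2 + a ^ 2 * b ^ 2))) atTop (𝓝 0) := by
    have h := tendsto_inv_atTop_zero.div
      (((tendsto_inv_atTop_zero.pow 2).const_mul (σ ^ 2)).add_const (a ^ 2)
        |>.const_mul (4 * σ ^ 2))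
      (by positivity : 4 * σ ^ 2 * (σ ^ 2 * 0 ^ 2 + a ^ 2) ≠ 0)
    rw [zero_div] at h
    refine h.congr' ?_
    filter_upwards [eventually_gt_atTop 0] with b hb
    simp only [Pi.div_apply]
    field_simp
  have harctan : Tendsto (fun b => arctan (a * b / σ)) atTop (𝓝 (π / 2)) :=
    (tendsto_arctan_atTop.mono_right nhdsWithin_le_nhds).comp
      ((tendsto_id.const_mul_atTop ha).atTop_div_const hσ)
  convert hrational.add (harctan.div_const (4 * σ ^ 3 * a)) using 1
  · exact funext (integral_fisherInfo hσ ha)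
  · rw [zero_add, div_div]
    congr 1
    ring

end FisherInfo

theorem fisher_info_riemann_sum_limit_general (σ η : ℝ) (hσ : 0 < σ) (hη : 0 < η)
    (M : ℕ → ℝ) (K : ℕ → ℕ)
    (hMtop : Filter.Tendsto M Filter.atTop Filter.atTop)
    (hKM : Filter.Tendsto (fun n => (K n : ℝ) / M n) Filter.atTop Filter.atTop) :
    Filter.Tendsto
      (fun n => (1 / M n) *
        ∑ j ∈ Finset.Icc 1 (K n),
          (1/2) / (σ^2 + η^2 * Real.pi^2 * ((j : ℝ) / M n)^2)^2)
      Filter.atTop (nhds (1 / (8 * η * σ^3))) := by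
  have hlimit : π / (8 * σ ^ 3 * (η * π)) = 1 / (8 * η * σ ^ 3) := by
    field_simp
  have h := (antitoneOn_fisherInfo hσ).tendsto_riemannSum
    (tendsto_integral_fisherInfo hσ (mul_pos hη pi_pos)) hMtop hKM
  simpa only [fisherInfo, mul_pow, hlimit] using h

/-- Riemann-sum convergence of the normalized sum of local Fisher
informations: if `M_n → ∞` and `K_n / M_n → ∞`, then
`(1/M_n) Σ_{j=1}^{K_n} (1/2)(σ² + η²π²(j/M_n)²)⁻² → 1/(8ησ³)`. -/
theorem fisher_info_riemann_sum_limit (σ η : ℝ) (hσ : 0 < σ) (hη : 0 < η)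
    (M : ℕ → ℝ) (K : ℕ → ℕ) (hM : ∀ n, 0 < M n)
    (hMtop : Filter.Tendsto M Filter.atTop Filter.atTop)
    (hKM : Filter.Tendsto (fun n => (K n : ℝ) / M n) Filter.atTop Filter.atTop) :
    Filter.Tendsto
      (fun n => (1 / M n) *
        ∑ j ∈ Finset.Icc 1 (K n),
          (1/2) / (σ^2 + η^2 * Real.pi^2 * ((j : ℝ) / M n)^2)^2)
      Filter.atTop (nhds (1 / (8 * η * σ^3))) :=
  fisher_info_riemann_sum_limit_general σ η hσ hη M K hMtop hKM
end
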